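/- arXiv:1901.07397 — 3 statements merged into one kernel-verified Lean document; each statement's English description precedes it below -/
import Mathlib

section
/- Let λ, σ, τ > 0 be real, p, q complex with Re(p) > 0, Re(q) > 0, η a complex number, and n ∈ ℕ. Assume that all occurring values B_{p,q}^{λ;σ,τ}(η+k, −η−k) (0 ≤ k ≤ n) and B_{p,q}^{λ;σ,τ}(η, −η−m) (0 ≤ m ≤ n) are defined by the integral formula, i.e. the integrands defining these extended beta values are integrable on (0,1). Then B_{p,q}^{λ;σ,τ}(η, −η−n) = Σ_{k=0}^n (n choose k) · B_{p,q}^{λ;σ,τ}(η+k, −η−k). -/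
open MeasureTheory Set Complex

/-- The classical Mittag-Leffler function `E_λ(x) = Σ xⁿ / Γ(λn+1)`. -/
noncomputable def mlE (lam : ℝ) (x : ℂ) : ℂ :=
  ∑' n : ℕ, x ^ n / Complex.Gamma (lam * n + 1)

/-- The extended beta function
`B_{p,q}^{λ;σ,τ}(η₁,η₂) = ∫₀¹ t^{η₁-1}(1-t)^{η₂-1} E_λ(-p/t^σ) E_λ(-q/(1-t)^τ) dt`. -/
noncomputable def extBeta (lam sig tau : ℝ) (p q e1 e2 : ℂ) : ℂ :=
  ∫ t in Ioo (0:ℝ) 1,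
    (t : ℂ) ^ (e1 - 1) * (1 - (t : ℂ)) ^ (e2 - 1) *
      mlE lam (-p / (t : ℂ) ^ (sig : ℂ)) * mlE lam (-q / (1 - (t : ℂ)) ^ (tau : ℂ))

theorem extBeta_binomial_relation (lam sig tau : ℝ) (hlam : 0 < lam) (hsig : 0 < sig)
    (htau : 0 < tau) (p q : ℂ) (hp : 0 < p.re) (hq : 0 < q.re) (eta : ℂ) (n : ℕ)
    (hint1 : ∀ k ≤ n, IntegrableOn (fun t : ℝ =>
        (t : ℂ) ^ (eta + k - 1) * (1 - (t : ℂ)) ^ (-eta - k - 1) *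
          mlE lam (-p / (t : ℂ) ^ (sig : ℂ)) * mlE lam (-q / (1 - (t : ℂ)) ^ (tau : ℂ)))
      (Ioo (0:ℝ) 1))
    (hint2 : ∀ m ≤ n, IntegrableOn (fun t : ℝ =>
        (t : ℂ) ^ (eta - 1) * (1 - (t : ℂ)) ^ (-eta - m - 1) *
          mlE lam (-p / (t : ℂ) ^ (sig : ℂ)) * mlE lam (-q / (1 - (t : ℂ)) ^ (tau : ℂ)))
      (Ioo (0:ℝ) 1)) :
    extBeta lam sig tau p q eta (-eta - n)
      = ∑ k ∈ Finset.range (n + 1),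
          (n.choose k : ℂ) * extBeta lam sig tau p q (eta + k) (-eta - k) := by
  have hsum : ∀ k ∈ Finset.range (n + 1), IntegrableOn (fun t : ℝ =>
      (n.choose k : ℂ) * ((t : ℂ) ^ (eta + k - 1) * (1 - (t : ℂ)) ^ (-eta - k - 1) *
        mlE lam (-p / (t : ℂ) ^ (sig : ℂ)) * mlE lam (-q / (1 - (t : ℂ)) ^ (tau : ℂ))))
      (Ioo (0:ℝ) 1) := fun k hk =>
    (hint1 k (Nat.lt_succ_iff.mp (Finset.mem_range.mp hk))).const_mul _
  calc extBeta lam sig tau p q eta (-eta - n)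
      = ∫ t in Ioo (0:ℝ) 1, ∑ k ∈ Finset.range (n + 1), (n.choose k : ℂ) *
          ((t : ℂ) ^ (eta + k - 1) * (1 - (t : ℂ)) ^ (-eta - k - 1) *
            mlE lam (-p / (t : ℂ) ^ (sig : ℂ)) *
            mlE lam (-q / (1 - (t : ℂ)) ^ (tau : ℂ))) := by
        apply setIntegral_congr_fun measurableSet_Ioo
        intro t ht
        obtain ⟨ht0, ht1⟩ := ht
        have hx : (t : ℂ) ≠ 0 := by exact_mod_cast ne_of_gt ht0
        have hy : (1 : ℂ) - t ≠ 0 := by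
          have h : (t : ℂ) ≠ 1 := by exact_mod_cast ne_of_lt ht1
          exact sub_ne_zero.mpr (Ne.symm h)
        have h1 : ∀ k : ℕ, (t : ℂ) ^ (eta + k - 1) = (t : ℂ) ^ (eta - 1) * (t : ℂ) ^ k := by
          intro k
          rw [show eta + k - 1 = (eta - 1) + (k : ℂ) by ring, cpow_add _ _ hx, cpow_natCast]
        have h2 : ∀ k ∈ Finset.range (n + 1),
            (1 - (t : ℂ)) ^ (-eta - k - 1)
              = (1 - (t : ℂ)) ^ (-eta - n - 1) * (1 - (t : ℂ)) ^ (n - k) := by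
          intro k hk
          have hkn : k ≤ n := Nat.lt_succ_iff.mp (Finset.mem_range.mp hk)
          rw [show -eta - k - 1 = (-eta - n - 1) + ((n - k : ℕ) : ℂ) by
            push_cast [Nat.cast_sub hkn]; ring, cpow_add _ _ hy, cpow_natCast]
        have hbin : ∑ k ∈ Finset.range (n + 1),
            (t : ℂ) ^ k * (1 - (t : ℂ)) ^ (n - k) * (n.choose k : ℂ) = 1 := by
          have h := add_pow (t : ℂ) (1 - (t : ℂ)) n
          have hone : (t : ℂ) + (1 - (t : ℂ)) = 1 := by ring
          rw [hone, one_pow] at h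
          exact h.symm
        calc (t : ℂ) ^ (eta - 1) * (1 - (t : ℂ)) ^ (-eta - ↑n - 1) *
              mlE lam (-p / (t : ℂ) ^ (sig : ℂ)) * mlE lam (-q / (1 - (t : ℂ)) ^ (tau : ℂ))
            = ((t : ℂ) ^ (eta - 1) * (1 - (t : ℂ)) ^ (-eta - ↑n - 1) *
                mlE lam (-p / (t : ℂ) ^ (sig : ℂ)) *
                mlE lam (-q / (1 - (t : ℂ)) ^ (tau : ℂ))) *
              ∑ k ∈ Finset.range (n + 1),
                (t : ℂ) ^ k * (1 - (t : ℂ)) ^ (n - k) * (n.choose k : ℂ) := by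
              rw [hbin, mul_one]
          _ = _ := by
              rw [Finset.mul_sum]
              refine Finset.sum_congr rfl fun k hk => ?_
              rw [h1 k, h2 k hk]
              ring
    _ = ∑ k ∈ Finset.range (n + 1), ∫ t in Ioo (0:ℝ) 1, (n.choose k : ℂ) *
          ((t : ℂ) ^ (eta + k - 1) * (1 - (t : ℂ)) ^ (-eta - k - 1) *
            mlE lam (-p / (t : ℂ) ^ (sig : ℂ)) *
            mlE lam (-q / (1 - (t : ℂ)) ^ (tau : ℂ))) :=
        integral_finset_sum _ hsum
    _ = _ := by
        refine Finset.sum_congr rfl fun k hk => ?_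
        rw [MeasureTheory.integral_const_mul]
        rfl
end

section
/- Let λ, σ, τ > 0, p > 0, q > 0 be real, and let η₁, η₂ be real with η₁ > 0, η₂ > 0. Define the probability density f(t) = t^{η₁-1}(1-t)^{η₂-1} E_λ(−p/t^σ) E_λ(−q/(1-t)^τ) / B_{p,q}^{λ;σ,τ}(η₁,η₂) for 0 < t < 1 and f(t) = 0 otherwise. Then for every real t₀ the moment generating function M(t₀) = ∫₀¹ e^{t₀ x} f(x) dx satisfies M(t₀) = (1 / B_{p,q}^{λ;σ,τ}(η₁,η₂)) · Σ_{n=0}^∞ B_{p,q}^{λ;σ,τ}(η₁+n, η₂) · t₀^n / n!. -/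
open MeasureTheory Set Complex

lemma cexp_eq_tsum (z : ℂ) : Complex.exp z = ∑' n : ℕ, z ^ n / (Nat.factorial n : ℂ) := by
  rw [Complex.exp_eq_exp_ℂ, NormedSpace.exp_eq_tsum_div]

theorem extBeta_mgf (lam sig tau p q e1 e2 : ℝ) (hlam : 0 < lam) (hsig : 0 < sig)
    (htau : 0 < tau) (hp : 0 < p) (hq : 0 < q) (he1 : 0 < e1) (he2 : 0 < e2) (t0 : ℝ) :
    (∫ x in Ioo (0:ℝ) 1, Complex.exp ((t0 : ℂ) * (x : ℂ)) *
        ((x : ℂ) ^ ((e1 : ℂ) - 1) * (1 - (x : ℂ)) ^ ((e2 : ℂ) - 1) *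
            mlE lam (-(p : ℂ) / (x : ℂ) ^ (sig : ℂ)) *
            mlE lam (-(q : ℂ) / (1 - (x : ℂ)) ^ (tau : ℂ)) /
          extBeta lam sig tau (p : ℂ) (q : ℂ) (e1 : ℂ) (e2 : ℂ)))
      = 1 / extBeta lam sig tau (p : ℂ) (q : ℂ) (e1 : ℂ) (e2 : ℂ) *
          ∑' n : ℕ, extBeta lam sig tau (p : ℂ) (q : ℂ) ((e1 : ℂ) + n) (e2 : ℂ) *
            (t0 : ℂ) ^ n / (Nat.factorial n : ℂ) := by
  set B := extBeta lam sig tau (p : ℂ) (q : ℂ) (e1 : ℂ) (e2 : ℂ) with hBdef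
  by_cases hB : B = 0
  · simp [hB]
  · set h : ℝ → ℂ := fun x : ℝ => (x : ℂ) ^ ((e1 : ℂ) - 1) * (1 - (x : ℂ)) ^ ((e2 : ℂ) - 1) *
      mlE lam (-(p : ℂ) / (x : ℂ) ^ (sig : ℂ)) *
      mlE lam (-(q : ℂ) / (1 - (x : ℂ)) ^ (tau : ℂ)) with hh
    have hBint : B = ∫ x in Ioo (0:ℝ) 1, h x := rfl
    have hint : IntegrableOn h (Ioo (0:ℝ) 1) := by
      by_contra hni
      exact hB (hBint.trans (integral_undef hni))
    set F : ℕ → ℝ → ℂ := fun n x => ((t0 : ℂ) * x) ^ n / (Nat.factorial n : ℂ) * h x with hF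
    have hFbound : ∀ n : ℕ, ∀ x ∈ Ioo (0:ℝ) 1,
        ‖F n x‖ ≤ ‖(((|t0| ^ n / Nat.factorial n : ℝ)) : ℂ) * h x‖ := by
      intro n x hx
      have hc : ‖(((|t0| ^ n / Nat.factorial n : ℝ)) : ℂ) * h x‖ =
          |t0| ^ n / Nat.factorial n * ‖h x‖ := by
        rw [norm_mul, Complex.norm_real, Real.norm_eq_abs,
          _root_.abs_of_nonneg (by positivity : (0:ℝ) ≤ |t0| ^ n / Nat.factorial n)]
      have h1 : ‖(t0 : ℂ) * (x : ℂ)‖ ≤ |t0| := by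
        rw [norm_mul, Complex.norm_real, Complex.norm_real, Real.norm_eq_abs, Real.norm_eq_abs,
          _root_.abs_of_nonneg hx.1.le]
        nlinarith [abs_nonneg t0, hx.2.le, hx.1.le]
      rw [hc]
      show ‖((t0 : ℂ) * x) ^ n / (Nat.factorial n : ℂ) * h x‖ ≤ _
      rw [norm_mul, norm_div, norm_pow, RCLike.norm_natCast]
      gcongr
    have hFmeas : ∀ n : ℕ, AEStronglyMeasurable (F n) (volume.restrict (Ioo (0:ℝ) 1)) := by
      intro n
      exact (((continuous_const.mul Complex.continuous_ofReal).pow n).div_const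
        _).aestronglyMeasurable.mul hint.aestronglyMeasurable
    have hFint : ∀ n : ℕ, IntegrableOn (F n) (Ioo (0:ℝ) 1) := by
      intro n
      refine Integrable.mono (hint.const_mul (((|t0| ^ n / Nat.factorial n : ℝ)) : ℂ))
        (hFmeas n) ?_
      filter_upwards [ae_restrict_mem measurableSet_Ioo] with x hx
      exact hFbound n x hx
    have hnormint : ∀ n : ℕ, (∫ x in Ioo (0:ℝ) 1, ‖F n x‖) ≤
        |t0| ^ n / Nat.factorial n * ∫ x in Ioo (0:ℝ) 1, ‖h x‖ := by
      intro n
      have step1 : (∫ x in Ioo (0:ℝ) 1, ‖F n x‖) ≤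
          ∫ x in Ioo (0:ℝ) 1, ‖(((|t0| ^ n / Nat.factorial n : ℝ)) : ℂ) * h x‖ := by
        refine integral_mono_ae (hFint n).norm
          (hint.const_mul (((|t0| ^ n / Nat.factorial n : ℝ)) : ℂ)).norm ?_
        filter_upwards [ae_restrict_mem measurableSet_Ioo] with x hx
        exact hFbound n x hx
      refine step1.trans (le_of_eq ?_)
      have hc : ∀ x : ℝ, ‖(((|t0| ^ n / Nat.factorial n : ℝ)) : ℂ) * h x‖ =
          |t0| ^ n / Nat.factorial n * ‖h x‖ := fun x => by
        rw [norm_mul, Complex.norm_real, Real.norm_eq_abs,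
          _root_.abs_of_nonneg (by positivity : (0:ℝ) ≤ |t0| ^ n / Nat.factorial n)]
      simp_rw [hc]
      exact integral_const_mul _ _
    have hsum : Summable (fun n : ℕ => ∫ x in Ioo (0:ℝ) 1, ‖F n x‖) := by
      refine Summable.of_nonneg_of_le (fun n => integral_nonneg fun x => norm_nonneg _)
        hnormint ?_
      exact (Real.summable_pow_div_factorial |t0|).mul_right _
    have key : ∑' n : ℕ, (∫ x in Ioo (0:ℝ) 1, F n x) =
        ∫ x in Ioo (0:ℝ) 1, ∑' n : ℕ, F n x :=
      integral_tsum_of_summable_integral_norm hFint hsum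
    have hptw : ∀ x : ℝ, (∑' n : ℕ, F n x) = Complex.exp ((t0 : ℂ) * x) * h x := by
      intro x
      rw [hF]
      rw [tsum_mul_right, ← cexp_eq_tsum]
    have hterm : ∀ n : ℕ, (∫ x in Ioo (0:ℝ) 1, F n x) =
        extBeta lam sig tau (p : ℂ) (q : ℂ) ((e1 : ℂ) + n) (e2 : ℂ) *
          (t0 : ℂ) ^ n / (Nat.factorial n : ℂ) := by
      intro n
      have hcongr : ∀ x ∈ Ioo (0:ℝ) 1, F n x =
          (t0 : ℂ) ^ n / (Nat.factorial n : ℂ) *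
            ((x : ℂ) ^ (((e1 : ℂ) + n) - 1) * (1 - (x : ℂ)) ^ ((e2 : ℂ) - 1) *
              mlE lam (-(p : ℂ) / (x : ℂ) ^ (sig : ℂ)) *
              mlE lam (-(q : ℂ) / (1 - (x : ℂ)) ^ (tau : ℂ))) := by
        intro x hx
        have hx0 : (x : ℂ) ≠ 0 := by
          exact_mod_cast ne_of_gt hx.1
        have he : ((e1 : ℂ) + n) - 1 = (n : ℂ) + ((e1 : ℂ) - 1) := by ring
        show ((t0 : ℂ) * x) ^ n / (Nat.factorial n : ℂ) *
            ((x : ℂ) ^ ((e1 : ℂ) - 1) * (1 - (x : ℂ)) ^ ((e2 : ℂ) - 1) *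
              mlE lam (-(p : ℂ) / (x : ℂ) ^ (sig : ℂ)) *
              mlE lam (-(q : ℂ) / (1 - (x : ℂ)) ^ (tau : ℂ))) = _
        rw [he, cpow_add _ _ hx0, cpow_natCast, mul_pow]
        ring
      rw [setIntegral_congr_fun measurableSet_Ioo hcongr, integral_const_mul]
      rw [show extBeta lam sig tau (p : ℂ) (q : ℂ) ((e1 : ℂ) + n) (e2 : ℂ) =
        ∫ x in Ioo (0:ℝ) 1,
          (x : ℂ) ^ (((e1 : ℂ) + n) - 1) * (1 - (x : ℂ)) ^ ((e2 : ℂ) - 1) *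
            mlE lam (-(p : ℂ) / (x : ℂ) ^ (sig : ℂ)) *
            mlE lam (-(q : ℂ) / (1 - (x : ℂ)) ^ (tau : ℂ)) from rfl]
      ring
    have main : (∫ x in Ioo (0:ℝ) 1, Complex.exp ((t0 : ℂ) * x) * (h x / B))
        = 1 / B * ∑' n : ℕ, extBeta lam sig tau (p : ℂ) (q : ℂ) ((e1 : ℂ) + n) (e2 : ℂ) *
            (t0 : ℂ) ^ n / (Nat.factorial n : ℂ) := by
      calc (∫ x in Ioo (0:ℝ) 1, Complex.exp ((t0 : ℂ) * x) * (h x / B))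
          = (∫ x in Ioo (0:ℝ) 1, Complex.exp ((t0 : ℂ) * x) * h x) / B := by
            simp_rw [← mul_div_assoc]
            exact integral_div _ _
        _ = (∫ x in Ioo (0:ℝ) 1, ∑' n : ℕ, F n x) / B := by
            congr 1
            exact integral_congr_ae (Filter.Eventually.of_forall fun x => (hptw x).symm)
        _ = (∑' n : ℕ, (∫ x in Ioo (0:ℝ) 1, F n x)) / B := by rw [key]
        _ = (∑' n : ℕ, extBeta lam sig tau (p : ℂ) (q : ℂ) ((e1 : ℂ) + n) (e2 : ℂ) *
              (t0 : ℂ) ^ n / (Nat.factorial n : ℂ)) / B := by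
            congr 1
            exact tsum_congr hterm
        _ = 1 / B * ∑' n : ℕ, extBeta lam sig tau (p : ℂ) (q : ℂ) ((e1 : ℂ) + n) (e2 : ℂ) *
              (t0 : ℂ) ^ n / (Nat.factorial n : ℂ) := by
            rw [div_eq_mul_inv, one_div, mul_comm]
    exact main
end

section
/- Let λ, σ, τ > 0 be real, p, q complex with Re(p) ≥ 0, Re(q) ≥ 0, η₁, η₂, η₃ complex with Re(η₃) > Re(η₂) > 0, and n ∈ ℕ. Then for all complex z with |z| < 1, the n-th derivative of z ↦ F_{p,q}^{λ;σ,τ}(η₁, η₂; η₃; z) satisfies (d^n/dz^n) F_{p,q}^{λ;σ,τ}(η₁, η₂; η₃; z) = ((η₁)_n (η₂)_n / (η₃)_n) · F_{p,q}^{λ;σ,τ}(η₁+n, η₂+n; η₃+n; z). -/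
open MeasureTheory Set Complex

/-- The extended Gauss hypergeometric function
`F_{p,q}^{λ;σ,τ}(η₁,η₂;η₃;z) = Σ (η₁)ₙ (B_{p,q}^{λ;σ,τ}(η₂+n,η₃-η₂)/B(η₂,η₃-η₂)) zⁿ/n!`. -/
noncomputable def extF (lam sig tau : ℝ) (p q e1 e2 e3 z : ℂ) : ℂ :=
  ∑' n : ℕ, (ascPochhammer ℂ n).eval e1 *
    (extBeta lam sig tau p q (e2 + n) (e3 - e2) / Complex.betaIntegral e2 (e3 - e2)) *
    z ^ n / (Nat.factorial n : ℂ)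

/-! The Taylor coefficients `(η₁)ₙ B^{ext}(η₂+n, η₃-η₂) / (B(η₂, η₃-η₂) n!)` of `F` grow at most
polynomially: `|(η₁)ₙ| ≤ n! (n+1)^k` for `k ≥ |η₁|`, and the extended beta values are bounded in
`n` because their integrands decrease in norm on `(0,1)` as `n` grows. Hence `F` is differentiable
termwise on the unit disc, and `(η₁)ₙ₊₁ = η₁ (η₁+1)ₙ` together with
`B(η₂+1, η₃-η₂) = (η₂/η₃) B(η₂, η₃-η₂)` identifies the differentiated series with
`(η₁η₂/η₃) F(η₁+1, η₂+1; η₃+1)`. Induction on `n` finishes the proof. -/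

open Filter Topology Polynomial
open scoped Nat

lemma summable_add_one_pow_mul_geometric {r : ℝ} (hr0 : 0 < r) (hr1 : r < 1) (k : ℕ) :
    Summable fun n : ℕ => ((n : ℝ) + 1) ^ k * r ^ n := by
  have hgeom : Summable fun n : ℕ => (n : ℝ) ^ k * r ^ n :=
    summable_pow_mul_geometric_of_norm_lt_one k (by rwa [Real.norm_of_nonneg hr0.le])
  have hshift : Summable fun n : ℕ => ((n + 1 : ℕ) : ℝ) ^ k * r ^ (n + 1) :=
    (summable_nat_add_iff 1).mpr hgeom
  refine (hshift.mul_left r⁻¹).congr fun n => ?_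
  push_cast
  field_simp
  ring

lemma norm_ascPochhammer_eval_le {R : Type*} [SeminormedRing R] [NormOneClass R]
    {a : R} {k : ℕ} (ha : ‖a‖ ≤ k) (n : ℕ) :
    ‖(ascPochhammer R n).eval a‖ ≤ n ! * ((n : ℝ) + 1) ^ k := by
  have hdom : ‖(ascPochhammer R n).eval a‖ ≤ (ascPochhammer ℝ n).eval ((k + 1 : ℕ) : ℝ) := by
    induction n with
    | zero => simp
    | succ n ih =>
      rw [ascPochhammer_succ_eval, ascPochhammer_succ_eval]
      refine (norm_mul_le _ _).trans (mul_le_mul ih ?_ (norm_nonneg _)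
        (ascPochhammer_pos _ _ (by positivity)).le)
      calc ‖a + n‖ ≤ ‖a‖ + n :=
            (norm_add_le _ _).trans (by simpa using Nat.norm_cast_le (α := R) n)
        _ ≤ (k + 1 : ℕ) + n := by push_cast; linarith
  rw [ascPochhammer_nat_eq_natCast_ascFactorial, Nat.ascFactorial_eq_factorial_mul_choose] at hdom
  refine hdom.trans ?_
  push_cast
  gcongr
  rw [add_comm k n, Nat.choose_symm_add]
  exact_mod_cast Nat.choose_add_le_add_one_pow n k

lemma norm_natCast_mul_pow_pred_le {𝕜 : Type*} [NormedField 𝕜] {y : 𝕜} {r : ℝ} (hr : 0 < r)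
    (hy : ‖y‖ ≤ r) (n : ℕ) : ‖(n : 𝕜) * y ^ (n - 1)‖ ≤ ((n : ℝ) + 1) * r ^ n / r := by
  cases n with
  | zero => simp; positivity
  | succ m =>
    rw [norm_mul, norm_pow, Nat.add_sub_cancel, pow_succ, mul_div_assoc,
      mul_div_cancel_right₀ _ hr.ne']
    have hcast : ‖((m + 1 : ℕ) : 𝕜)‖ ≤ ((m + 1 : ℕ) : ℝ) + 1 := by
      simpa using (Nat.norm_cast_le (α := 𝕜) (m + 1)).trans (by simp)
    gcongr

lemma hasDerivAt_tsum_mul_pow {𝕜 : Type*} [RCLike 𝕜] {c : ℕ → 𝕜} {K : ℝ} {k : ℕ}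
    (hc : ∀ n, ‖c n‖ ≤ K * ((n : ℝ) + 1) ^ k) {z : 𝕜} (hz : ‖z‖ < 1) :
    HasDerivAt (fun w => ∑' n, c n * w ^ n) (∑' n, c (n + 1) * (n + 1) * z ^ n) z := by
  obtain ⟨r, hzr, hr1⟩ := exists_between hz
  have hr0 : 0 < r := (norm_nonneg z).trans_lt hzr
  rw [← mem_ball_zero_iff] at hzr
  have hbound : ∀ n (y : 𝕜), y ∈ Metric.ball (0 : 𝕜) r →
      ‖c n * (n * y ^ (n - 1))‖ ≤ K / r * (((n : ℝ) + 1) ^ (k + 1) * r ^ n) := by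
    intro n y hy
    rw [mem_ball_zero_iff] at hy
    calc ‖c n * (n * y ^ (n - 1))‖ ≤ K * ((n : ℝ) + 1) ^ k * (((n : ℝ) + 1) * r ^ n / r) :=
          (norm_mul_le _ _).trans (mul_le_mul (hc n) (norm_natCast_mul_pow_pred_le hr0 hy.le n)
            (norm_nonneg _) ((norm_nonneg _).trans (hc n)))
      _ = K / r * (((n : ℝ) + 1) ^ (k + 1) * r ^ n) := by ring
  have hsum := (summable_add_one_pow_mul_geometric hr0 hr1 (k + 1)).mul_left (K / r)
  have hsum_zero : Summable fun n => c n * (0 : 𝕜) ^ n :=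
    (summable_nat_add_iff 1).mp (by simp [summable_zero])
  have hderiv := hasDerivAt_tsum_of_isPreconnected hsum Metric.isOpen_ball
    (convex_ball 0 r).isPreconnected (fun n y _ => (hasDerivAt_pow n y).const_mul (c n)) hbound
    (Metric.mem_ball_self hr0) hsum_zero hzr
  have hsum_deriv : Summable fun n => c n * (n * z ^ (n - 1)) :=
    .of_norm_bounded hsum fun n => hbound n z hzr
  rw [hsum_deriv.tsum_eq_zero_add] at hderiv
  simpa [mul_assoc] using hderiv

lemma Complex.betaIntegral_ne_zero {u v : ℂ} (hu : 0 < u.re) (hv : 0 < v.re) :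
    betaIntegral u v ≠ 0 := by
  rw [betaIntegral_eq_Gamma_mul_div u v hu hv]
  exact div_ne_zero (mul_ne_zero (Gamma_ne_zero_of_re_pos hu) (Gamma_ne_zero_of_re_pos hv))
    (Gamma_ne_zero_of_re_pos (by rw [add_re]; positivity))

lemma Complex.betaIntegral_add_one_left {u v : ℂ} (hu : 0 < u.re) (hv : 0 < v.re) :
    betaIntegral (u + 1) v = u / (u + v) * betaIntegral u v := by
  have hu0 : u ≠ 0 := fun h => by simp [h] at hu
  have huv0 : u + v ≠ 0 := fun h => by
    have := congrArg re h
    rw [add_re, zero_re] at this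
    linarith
  rw [betaIntegral_eq_Gamma_mul_div _ _ (by rw [add_re, one_re]; positivity) hv,
    betaIntegral_eq_Gamma_mul_div _ _ hu hv, add_right_comm, Gamma_add_one u hu0,
    Gamma_add_one (u + v) huv0]
  field_simp

/-- Non-integrable integrands have integral `0`, so the first integrable index dominates all later
ones and the earlier ones vanish. -/
lemma exists_norm_setIntegral_cpow_mul_le (μ : Measure ℝ) (f : ℝ → ℂ) (b : ℂ) :
    ∃ C, ∀ m : ℕ, ‖∫ t in Ioo (0 : ℝ) 1, (t : ℂ) ^ (b + m - 1) * f t ∂μ‖ ≤ C := by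
  classical
  by_cases hint : ∃ m : ℕ, IntegrableOn (fun t : ℝ => (t : ℂ) ^ (b + m - 1) * f t) (Ioo 0 1) μ
  · refine ⟨∫ t in Ioo (0 : ℝ) 1, ‖(t : ℂ) ^ (b + Nat.find hint - 1) * f t‖ ∂μ, fun m => ?_⟩
    by_cases hm : Nat.find hint ≤ m
    · refine norm_integral_le_of_norm_le (Nat.find_spec hint).norm ?_
      filter_upwards [ae_restrict_mem measurableSet_Ioo] with t ht
      rw [norm_mul, norm_mul, norm_cpow_eq_rpow_re_of_pos ht.1, norm_cpow_eq_rpow_re_of_pos ht.1]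
      gcongr ?_ * _
      refine Real.rpow_le_rpow_of_exponent_ge ht.1 ht.2.le ?_
      simpa using hm
    · rw [integral_undef (Nat.find_min hint (not_le.mp hm)), norm_zero]
      exact integral_nonneg fun t => norm_nonneg _
  · rw [not_exists] at hint
    exact ⟨0, fun m => by rw [integral_undef (hint m), norm_zero]⟩

noncomputable def extFCoeff (lam sig tau : ℝ) (p q a b c : ℂ) (n : ℕ) : ℂ :=
  (ascPochhammer ℂ n).eval a *
    (extBeta lam sig tau p q (b + n) (c - b) / betaIntegral b (c - b)) / n !

section extF

variable (lam sig tau : ℝ) (p q : ℂ)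

lemma extF_eq_tsum (a b c z : ℂ) :
    extF lam sig tau p q a b c z = ∑' n, extFCoeff lam sig tau p q a b c n * z ^ n :=
  tsum_congr fun n => by rw [extFCoeff]; ring

lemma exists_norm_extFCoeff_le (a b c : ℂ) :
    ∃ (K : ℝ) (k : ℕ), ∀ n, ‖extFCoeff lam sig tau p q a b c n‖ ≤ K * ((n : ℝ) + 1) ^ k := by
  obtain ⟨C, hC⟩ := exists_norm_setIntegral_cpow_mul_le volume
    (fun t : ℝ => (1 - (t : ℂ)) ^ (c - b - 1) * mlE lam (-p / (t : ℂ) ^ (sig : ℂ)) *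
      mlE lam (-q / (1 - (t : ℂ)) ^ (tau : ℂ))) b
  refine ⟨C / ‖betaIntegral b (c - b)‖, ⌈‖a‖⌉₊, fun n => ?_⟩
  have hβ : ‖extBeta lam sig tau p q (b + n) (c - b)‖ ≤ C := by
    simpa only [extBeta, mul_assoc] using hC n
  rw [extFCoeff, norm_div, norm_mul, norm_div, norm_natCast]
  calc _ ≤ n ! * ((n : ℝ) + 1) ^ ⌈‖a‖⌉₊ * (C / ‖betaIntegral b (c - b)‖) / n ! := by
        gcongr
        exact norm_ascPochhammer_eval_le (Nat.le_ceil ‖a‖) n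
    _ = C / ‖betaIntegral b (c - b)‖ * ((n : ℝ) + 1) ^ ⌈‖a‖⌉₊ := by
        field_simp

lemma ascPochhammer_succ_eval_left {S : Type*} [CommSemiring S] (n : ℕ) (x : S) :
    (ascPochhammer S (n + 1)).eval x = x * (ascPochhammer S n).eval (x + 1) := by
  rw [ascPochhammer_succ_left, eval_mul, eval_X, eval_comp, eval_add, eval_X, eval_one]

lemma extFCoeff_succ_mul {a b c : ℂ} (hb : 0 < b.re) (hbc : b.re < c.re) (n : ℕ) :
    extFCoeff lam sig tau p q a b c (n + 1) * (n + 1) =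
      a * b / c * extFCoeff lam sig tau p q (a + 1) (b + 1) (c + 1) n := by
  have hcb : 0 < (c - b).re := by rw [sub_re]; linarith
  have hB := betaIntegral_ne_zero hb hcb
  have hb0 : b ≠ 0 := fun h => by rw [h, zero_re] at hb; exact lt_irrefl 0 hb
  have hc : c ≠ 0 := fun h => by rw [h, zero_re] at hbc; linarith
  have hshift : b + 1 + (n : ℂ) = b + ((n + 1 : ℕ) : ℂ) := by push_cast; ring
  rw [extFCoeff, extFCoeff, add_sub_add_right_eq_sub, hshift, ascPochhammer_succ_eval_left,
    betaIntegral_add_one_left hb hcb, add_sub_cancel, Nat.factorial_succ]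
  push_cast
  field_simp

lemma hasDerivAt_extF {a b c z : ℂ} (hb : 0 < b.re) (hbc : b.re < c.re) (hz : ‖z‖ < 1) :
    HasDerivAt (extF lam sig tau p q a b c)
      (a * b / c * extF lam sig tau p q (a + 1) (b + 1) (c + 1) z) z := by
  obtain ⟨K, k, hK⟩ := exists_norm_extFCoeff_le lam sig tau p q a b c
  have hderiv := hasDerivAt_tsum_mul_pow hK hz
  simp only [extFCoeff_succ_mul lam sig tau p q hb hbc, mul_assoc, tsum_mul_left,
    ← extF_eq_tsum] at hderiv
  convert hderiv using 1

end extF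

theorem extF_iterated_deriv_general (lam sig tau : ℝ) (p q e1 e2 e3 : ℂ)
    (he2 : 0 < e2.re) (he23 : e2.re < e3.re) (n : ℕ) :
    ∀ z : ℂ, ‖z‖ < 1 →
      iteratedDeriv n (fun w => extF lam sig tau p q e1 e2 e3 w) z
        = (ascPochhammer ℂ n).eval e1 * (ascPochhammer ℂ n).eval e2 /
            (ascPochhammer ℂ n).eval e3 *
          extF lam sig tau p q (e1 + n) (e2 + n) (e3 + n) z := by
  induction n with
  | zero => simp
  | succ n ih =>
    intro z hz
    have hb : 0 < (e2 + n).re := by rw [add_re, natCast_re]; positivity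
    have hbc : (e2 + n).re < (e3 + n).re := by simp only [add_re, natCast_re]; linarith
    have hev : iteratedDeriv n (fun w => extF lam sig tau p q e1 e2 e3 w) =ᶠ[𝓝 z]
        fun w => (ascPochhammer ℂ n).eval e1 * (ascPochhammer ℂ n).eval e2 /
          (ascPochhammer ℂ n).eval e3 * extF lam sig tau p q (e1 + n) (e2 + n) (e3 + n) w :=
      eventually_of_mem (Metric.isOpen_ball.mem_nhds (mem_ball_zero_iff.mpr hz))
        fun w hw => ih w (mem_ball_zero_iff.mp hw)
    rw [iteratedDeriv_succ, hev.deriv_eq,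
      ((hasDerivAt_extF lam sig tau p q hb hbc hz).const_mul _).deriv, ascPochhammer_succ_eval,
      ascPochhammer_succ_eval, ascPochhammer_succ_eval]
    push_cast
    simp only [add_assoc]
    rw [← mul_assoc, div_mul_div_comm, mul_mul_mul_comm]

theorem extF_iterated_deriv (lam sig tau : ℝ) (hlam : 0 < lam) (hsig : 0 < sig)
    (htau : 0 < tau) (p q e1 e2 e3 : ℂ) (hp : 0 ≤ p.re) (hq : 0 ≤ q.re)
    (he2 : 0 < e2.re) (he23 : e2.re < e3.re) (n : ℕ) :
    ∀ z : ℂ, ‖z‖ < 1 →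
      iteratedDeriv n (fun w => extF lam sig tau p q e1 e2 e3 w) z
        = (ascPochhammer ℂ n).eval e1 * (ascPochhammer ℂ n).eval e2 /
            (ascPochhammer ℂ n).eval e3 *
          extF lam sig tau p q (e1 + n) (e2 + n) (e3 + n) z :=
  extF_iterated_deriv_general lam sig tau p q e1 e2 e3 he2 he23 n
end
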